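/- arXiv:1205.3135 — 12 statements merged into one kernel-verified Lean document; each statement's English description precedes it below -/
import Mathlib

section
/- Let x1,x2,x3,d1,d2,d3,L be real numbers satisfying the cuboid equations. Define e10=x1+x2+x3, e01=d1+d2+d3, e30=x1*x2*x3, e11=x1*d2+d1*x2+x2*d3+d2*x3+x3*d1+d3*x1, e12=x1*d2*d3+x2*d3*d1+x3*d1*d2. Then 2*e12 + 6*e30 - 2*e01*e11 + e10*e01^2 + 3*e10*L^2 - e10^3 = 0. -/
theorem stmt_4 (x1 x2 x3 d1 d2 d3 L : ℝ) (h1 : x1^2 + x2^2 = d3^2) (h2 : x2^2 + x3^2 = d1^2) (h3 : x3^2 + x1^2 = d2^2) (h4 : d3^2 + x3^2 = L^2) (h5 : d1^2 + x1^2 = L^2) (h6 : d2^2 + x2^2 = L^2)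
    (e10 : ℝ) (he10 : e10 = x1+x2+x3) (e01 : ℝ) (he01 : e01 = d1+d2+d3)
    (e30 : ℝ) (he30 : e30 = x1*x2*x3)
    (e11 : ℝ) (he11 : e11 = x1*d2+d1*x2+x2*d3+d2*x3+x3*d1+d3*x1)
    (e12 : ℝ) (he12 : e12 = x1*d2*d3+x2*d3*d1+x3*d1*d2) :
    2*e12 + 6*e30 - 2*e01*e11 + e10*e01^2 + 3*e10*L^2 - e10^3 = 0 := by
  subst he10 he01 he30 he11 he12
  linear_combination (-2*x3)*h1 + (-2*x1)*h2 + (-2*x2)*h3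
    - (x1+x2+x3)*h4 - (x1+x2+x3)*h5 - (x1+x2+x3)*h6
end

section
/- Let x1,x2,x3,d1,d2,d3,L be real numbers satisfying the cuboid equations. Define e10=x1+x2+x3, e01=d1+d2+d3, e03=d1*d2*d3, e11=x1*d2+d1*x2+x2*d3+d2*x3+x3*d1+d3*x1, e21=x1*x2*d3+x2*x3*d1+x3*x1*d2. Then 2*e21 + 6*e03 - 2*e10*e11 + e01*e10^2 + 5*e01*L^2 - e01^3 = 0. -/
theorem stmt_5 (x1 x2 x3 d1 d2 d3 L : ℝ) (h1 : x1^2 + x2^2 = d3^2) (h2 : x2^2 + x3^2 = d1^2) (h3 : x3^2 + x1^2 = d2^2) (h4 : d3^2 + x3^2 = L^2) (h5 : d1^2 + x1^2 = L^2) (h6 : d2^2 + x2^2 = L^2)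
    (e10 : ℝ) (he10 : e10 = x1+x2+x3) (e01 : ℝ) (he01 : e01 = d1+d2+d3)
    (e03 : ℝ) (he03 : e03 = d1*d2*d3)
    (e11 : ℝ) (he11 : e11 = x1*d2+d1*x2+x2*d3+d2*x3+x3*d1+d3*x1)
    (e21 : ℝ) (he21 : e21 = x1*x2*d3+x2*x3*d1+x3*x1*d2) :
    2*e21 + 6*e03 - 2*e10*e11 + e01*e10^2 + 5*e01*L^2 - e01^3 = 0 := by
  subst he10 he01 he03 he11 he21
  linear_combination (-2*d1-2*d2-4*d3)*h1 + (d1+3*d2+3*d3)*h2 + (3*d1+d2+3*d3)*h3 +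
    (-5*d1-5*d2-5*d3)*h4
end

section
/- Let x1,x2,x3,d1,d2,d3,L be real numbers satisfying the cuboid equations. Define e10=x1+x2+x3, e01=d1+d2+d3, e11=x1*d2+d1*x2+x2*d3+d2*x3+x3*d1+d3*x1, e21=x1*x2*d3+x2*x3*d1+x3*x1*d2, e12=x1*d2*d3+x2*d3*d1+x3*d1*d2. Then 8*e10*e12 - 8*e01*e21 - 8*e11^2 + 4*e01^2*e10^2 - e01^4 - 3*e10^4 + 10*e10^2*L^2 + 4*e01^2*L^2 + L^4 = 0. -/
theorem stmt_6 (x1 x2 x3 d1 d2 d3 L : ℝ) (h1 : x1^2 + x2^2 = d3^2) (h2 : x2^2 + x3^2 = d1^2) (h3 : x3^2 + x1^2 = d2^2) (h4 : d3^2 + x3^2 = L^2) (h5 : d1^2 + x1^2 = L^2) (h6 : d2^2 + x2^2 = L^2)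
    (e10 : ℝ) (he10 : e10 = x1+x2+x3) (e01 : ℝ) (he01 : e01 = d1+d2+d3)
    (e11 : ℝ) (he11 : e11 = x1*d2+d1*x2+x2*d3+d2*x3+x3*d1+d3*x1)
    (e21 : ℝ) (he21 : e21 = x1*x2*d3+x2*x3*d1+x3*x1*d2)
    (e12 : ℝ) (he12 : e12 = x1*d2*d3+x2*d3*d1+x3*d1*d2) :
    8*e10*e12 - 8*e01*e21 - 8*e11^2 + 4*e01^2*e10^2 - e01^4 - 3*e10^4 + 10*e10^2*L^2 + 4*e01^2*L^2 + L^4 = 0 := by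
  subst he10 he01 he11 he21 he12
  linear_combination
    (-L^2 - 4*d3^2 - 8*d2*d3 - 4*d2^2 - 8*d1*d3 - 8*d1*d2 - 4*d1^2 - 11*x3^2 - 20*x2*x3 - 11*x2^2 - 20*x1*x3 - 20*x1*x2 - 11*x1^2) * h4 +
    (2*d3^2 + 12*d2*d3 + 6*d2^2 + 4*d1*d3 + 4*d1*d2 + d1^2 + x3^2 + 16*x2*x3 + 5*x2^2 - 8*x1*x3 - 8*x1*x2 - 4*x1^2) * h2 +
    (2*d3^2 + 4*d2*d3 + d2^2 + 12*d1*d3 + 4*d1*d2 + 7*x3^2 - 8*x2*x3 + 2*x2^2 + 16*x1*x3 - 8*x1*x2 + 5*x1^2) * h3 +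
    (-L^2 - 3*d3^2 - 4*d2*d3 - 4*d1*d3 + 4*d1*d2 - 15*x3^2 - 28*x2*x3 - 8*x2^2 - 28*x1*x3 - 4*x1*x2 - 8*x1^2) * h1
end

section
/- Let x1,x2,x3,d1,d2,d3,L be real numbers satisfying the cuboid equations. Define e10=x1+x2+x3, e01=d1+d2+d3, e11=x1*d2+d1*x2+x2*d3+d2*x3+x3*d1+d3*x1, e21=x1*x2*d3+x2*x3*d1+x3*x1*d2, e12=x1*d2*d3+x2*d3*d1+x3*d1*d2. Then -8*e10*e12 + 8*e01*e21 - 8*e11^2 + 4*e01^2*e10^2 - e10^4 - 3*e01^4 + 20*e01^2*L^2 - 2*e10^2*L^2 - 5*L^4 = 0. -/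
theorem stmt_7 (x1 x2 x3 d1 d2 d3 L : ℝ) (h1 : x1^2 + x2^2 = d3^2) (h2 : x2^2 + x3^2 = d1^2) (h3 : x3^2 + x1^2 = d2^2) (h4 : d3^2 + x3^2 = L^2) (h5 : d1^2 + x1^2 = L^2) (h6 : d2^2 + x2^2 = L^2)
    (e10 : ℝ) (he10 : e10 = x1+x2+x3) (e01 : ℝ) (he01 : e01 = d1+d2+d3)
    (e11 : ℝ) (he11 : e11 = x1*d2+d1*x2+x2*d3+d2*x3+x3*d1+d3*x1)
    (e21 : ℝ) (he21 : e21 = x1*x2*d3+x2*x3*d1+x3*x1*d2)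
    (e12 : ℝ) (he12 : e12 = x1*d2*d3+x2*d3*d1+x3*d1*d2) :
    -8*e10*e12 + 8*e01*e21 - 8*e11^2 + 4*e01^2*e10^2 - e10^4 - 3*e01^4 + 20*e01^2*L^2 - 2*e10^2*L^2 - 5*L^4 = 0 := by
  subst he10 he01 he11 he21 he12
  linear_combination ((3)*d3*d3 + (12)*d2*d3 + (12)*d1*d3 + (36)*d1*d2 + (12)*x3*x3 + (-8)*x2*x3 + (5)*x2*x2 + (-8)*x1*x3 + (5)*x1*x1) * h1 + ((-2)*d3*d3 + (-4)*d2*d3 + (-2)*d2*d2 + (-28)*d1*d3 + (-28)*d1*d2 + (-12)*d1*d1 + (-6)*x3*x3 + (4)*x2*x3 + (-6)*x2*x2 + (-4)*x1*x3 + (-4)*x1*x2 + (-12)*x1*x1) * h2 + ((18)*d3*d3 + (12)*d2*d3 + (3)*d2*d2 + (36)*d1*d3 + (12)*d1*d2 + (5)*x3*x3 + (-8)*x2*x3 + (-6)*x2*x2 + (-8)*x1*x2 + (-13)*x1*x1) * h3 + ((5)*L*L + (-20)*d3*d3 + (-40)*d2*d3 + (-20)*d2*d2 + (-40)*d1*d3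 + (-40)*d1*d2 + (-15)*d1*d1 + (2)*x3*x3 + (4)*x2*x3 + (2)*x2*x2 + (4)*x1*x3 + (4)*x1*x2 + (7)*x1*x1) * h5
end

section
/- Let x1,x2,x3,d1,d2,d3,L be real numbers satisfying the cuboid equations. Define e10=x1+x2+x3, e01=d1+d2+d3, e21=x1*x2*d3+x2*x3*d1+x3*x1*d2, e12=x1*d2*d3+x2*d3*d1+x3*d1*d2. Then 8*e10*e12 - 8*e01*e21 + e01^4 - e10^4 - 8*e01^2*L^2 + 6*e10^2*L^2 + 3*L^4 = 0. -/
theorem stmt_8 (x1 x2 x3 d1 d2 d3 L : ℝ) (h1 : x1^2 + x2^2 = d3^2) (h2 : x2^2 + x3^2 = d1^2) (h3 : x3^2 + x1^2 = d2^2) (h4 : d3^2 + x3^2 = L^2) (h5 : d1^2 + x1^2 = L^2) (h6 : d2^2 + x2^2 = L^2)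
    (e10 : ℝ) (he10 : e10 = x1+x2+x3) (e01 : ℝ) (he01 : e01 = d1+d2+d3)
    (e21 : ℝ) (he21 : e21 = x1*x2*d3+x2*x3*d1+x3*x1*d2)
    (e12 : ℝ) (he12 : e12 = x1*d2*d3+x2*d3*d1+x3*d1*d2) :
    8*e10*e12 - 8*e01*e21 + e01^4 - e10^4 - 8*e01^2*L^2 + 6*e10^2*L^2 + 3*L^4 = 0 := by
  subst he10 he01 he21 he12
  linear_combination
    (-3*L^2 + 7*d3^2 + 12*d2*d3 + 2*d2^2 + 12*d1*d3 + 4*d1*d2 + 2*d1^2 - x3^2 - 12*x2*x3 - 2*x2^2 - 12*x1*x3 - 4*x1*x2 - 2*x1^2) * h1 +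
    (-12*d2*d3 - 6*d2^2 - 4*d1*d3 - 4*d1*d2 - d1^2 + 7*x3^2 + 8*x2*x3 + x2^2 + 2*x1^2) * h2 +
    (-4*d2*d3 - d2^2 - 12*d1*d3 - 4*d1*d2 + x3^2 - 4*x2^2 + 8*x1*x3 + x1^2) * h3 +
    (-3*L^2 + 8*d3^2 + 16*d2*d3 + 8*d2^2 + 16*d1*d3 + 16*d1*d2 + 8*d1^2 - 9*x3^2 - 12*x2*x3 - 9*x2^2 - 12*x1*x3 - 12*x1*x2 - 9*x1^2) * h4
end

section
/- Let x1,x2,x3,d1,d2,d3,L be real numbers satisfying the cuboid equations. Define e10=x1+x2+x3, e01=d1+d2+d3, e11=x1*d2+d1*x2+x2*d3+d2*x3+x3*d1+d3*x1. Then 4*e11^2 - 2*e01^2*e10^2 + e01^4 + e10^4 - 6*e01^2*L^2 - 2*e10^2*L^2 + L^4 = 0. -/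
theorem stmt_9 (x1 x2 x3 d1 d2 d3 L : ℝ) (h1 : x1^2 + x2^2 = d3^2) (h2 : x2^2 + x3^2 = d1^2) (h3 : x3^2 + x1^2 = d2^2) (h4 : d3^2 + x3^2 = L^2) (h5 : d1^2 + x1^2 = L^2) (h6 : d2^2 + x2^2 = L^2)
    (e10 : ℝ) (he10 : e10 = x1+x2+x3) (e01 : ℝ) (he01 : e01 = d1+d2+d3)
    (e11 : ℝ) (he11 : e11 = x1*d2+d1*x2+x2*d3+d2*x3+x3*d1+d3*x1) :
    4*e11^2 - 2*e01^2*e10^2 + e01^4 + e10^4 - 6*e01^2*L^2 - 2*e10^2*L^2 + L^4 = 0 := by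
  subst he10 he01 he11
  linear_combination (-1*d3^2 + -4*d2*d3 + -4*d1*d3 + -12*d1*d2 + -4*x3^2 + 4*x2*x3 + -3*x2^2 + 4*x1*x3 + -4*x1*x2 + -3*x1^2)*h1 + (8*d1*d3 + 8*d1*d2 + 4*d1^2 + 4*x3^2 + 4*x2^2 + 8*x1*x3 + 8*x1*x2 + 8*x1^2)*h2 + (-6*d3^2 + -4*d2*d3 + -1*d2^2 + -12*d1*d3 + -4*d1*d2 + -3*x3^2 + 4*x2*x3 + 2*x2^2 + -4*x1*x3 + 4*x1*x2 + 3*x1^2)*h3 + (-1*L^2 + 6*d3^2 + 12*d2*d3 + 6*d2^2 + 12*d1*d3 + 12*d1*d2 + 5*d1^2 + 2*x3^2 + 4*x2*x3 + 2*x2^2 + 4*x1*x3 + 4*x1*x2 + x1^2)*h5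
end

section
/- Let x1,x2,x3,d1,d2,d3,L be real numbers satisfying the cuboid equations. Define e10=x1+x2+x3, e01=d1+d2+d3, e11=x1*d2+d1*x2+x2*d3+d2*x3+x3*d1+d3*x1, e21=x1*x2*d3+x2*x3*d1+x3*x1*d2, e12=x1*d2*d3+x2*d3*d1+x3*d1*d2. Then 4*e11*e21 - 2*e11*e01^3 + 6*e12*e01^2 + 2*e12*e10^2 - e10^3*e01^2 + e10*e01^4 - 2*e12*L^2 - e10*e01^2*L^2 + 2*e10^3*L^2 - 2*e10*L^4 = 0. -/
theorem stmt_10 (x1 x2 x3 d1 d2 d3 L : ℝ) (h1 : x1^2 + x2^2 = d3^2) (h2 : x2^2 + x3^2 = d1^2) (h3 : x3^2 + x1^2 = d2^2) (h4 : d3^2 + x3^2 = L^2) (h5 : d1^2 + x1^2 = L^2) (h6 : d2^2 + x2^2 = L^2)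
    (e10 : ℝ) (he10 : e10 = x1+x2+x3) (e01 : ℝ) (he01 : e01 = d1+d2+d3)
    (e11 : ℝ) (he11 : e11 = x1*d2+d1*x2+x2*d3+d2*x3+x3*d1+d3*x1)
    (e21 : ℝ) (he21 : e21 = x1*x2*d3+x2*x3*d1+x3*x1*d2)
    (e12 : ℝ) (he12 : e12 = x1*d2*d3+x2*d3*d1+x3*d1*d2) :
    4*e11*e21 - 2*e11*e01^3 + 6*e12*e01^2 + 2*e12*e10^2 - e10^3*e01^2 + e10*e01^4 - 2*e12*L^2 - e10*e01^2*L^2 + 2*e10^3*L^2 - 2*e10*L^4 = 0 := by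
  subst he10 he01 he11 he21 he12
  linear_combination (x3*L^2 + (-1)*x3*d3^2 + (-2)*x3*d2*d3 + (-2)*x3*d1*d3 + (-6)*x3*d1*d2 + x3^3 + x2*L^2 + x2*d3^2 + (2)*x2*d2*d3 + (-2)*x2*d1*d3 + (-6)*x2*d1*d2 + (-3)*x2*x3^2 + (2)*x2^2*x3 + (-4)*x2^3 + x1*L^2 + x1*d3^2 + (-2)*x1*d2*d3 + (2)*x1*d1*d3 + (-6)*x1*d1*d2 + (-3)*x1*x3^2 + (6)*x1*x2*x3 + (0)*x1*x2^2 + (2)*x1^2*x3 + (0)*x1^2*x2 + (-4)*x1^3)*h1 + ((3)*x3*L^2 + (-4)*x3*d2*d3 + (-6)*x3*d2^2 + (4)*x3*d1*d3 + (2)*x3*d1*d2 + x3*d1^2 + (4)*x3^3 + (3)*x2*L^2 + (-6)*x2*d3^2 + (-4)*x2*d2*d3 + (2)*x2*d1*d3 + (4)*x2*d1*d2 + x2*d1^2 + (-2)*x2*x3^2 + (-2)*x2^2*x3 + (4)*x2^3 + (3)*x1*L^2 + (-2)*x1*d2*d3 + (-1)*x1*d1^2 + (-6)*x1*x2*x3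 + x1^2*x3 + x1^2*x2 + (3)*x1^3)*h2 + (x3*L^2 + (2)*x3*d2*d3 + x3*d2^2 + (-6)*x3*d1*d3 + (-2)*x3*d1*d2 + (-4)*x3^3 + x2*L^2 + (-2)*x2*d2*d3 + (-1)*x2*d2^2 + (-6)*x2*d1*d3 + (-2)*x2*d1*d2 + (2)*x2*x3^2 + (-3)*x2^2*x3 + x2^3 + x1*L^2 + (-6)*x1*d3^2 + (-2)*x1*d2*d3 + x1*d2^2 + (-6)*x1*d1*d3 + (2)*x1*d1*d2 + (0)*x1*x3^2 + (6)*x1*x2*x3 + (3)*x1*x2^2 + (0)*x1^2*x3 + (2)*x1^2*x2 + (2)*x1^3)*h3 + ((2)*x3*L^2 + (2)*x3*d2*d3 + (2)*x3*d1*d3 + (4)*x3*d1*d2 + (2)*x3^3 + (2)*x2*L^2 + (2)*x2*d2*d3 + (4)*x2*d1*d3 + (2)*x2*d1*d2 + (-2)*x2*x3^2 + (-2)*x2^2*x3 + (2)*x2^3 + (2)*x1*L^2 + (4)*x1*d2*d3 + (2)*x1*d1*d3 + (2)*x1*d1*d2 + (-2)*x1*x3^2 + (-12)*x1*x2*x3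 + (-2)*x1*x2^2 + (-2)*x1^2*x3 + (-2)*x1^2*x2 + (2)*x1^3)*h5
end

section
/- Let x1,x2,x3,d1,d2,d3,L be real numbers satisfying the cuboid equations. Define e10=x1+x2+x3, e01=d1+d2+d3, e11=x1*d2+d1*x2+x2*d3+d2*x3+x3*d1+d3*x1, e21=x1*x2*d3+x2*x3*d1+x3*x1*d2, e12=x1*d2*d3+x2*d3*d1+x3*d1*d2. Then 4*e11*e12 - 2*e11*e10^3 + 6*e21*e10^2 + 2*e21*e01^2 - e01^3*e10^2 + e01*e10^4 + 2*e21*L^2 - 2*e11*e10*L^2 + 2*e01*e10^2*L^2 + e01^3*L^2 - 3*e01*L^4 = 0. -/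
theorem stmt_11 (x1 x2 x3 d1 d2 d3 L : ℝ) (h1 : x1^2 + x2^2 = d3^2) (h2 : x2^2 + x3^2 = d1^2) (h3 : x3^2 + x1^2 = d2^2) (h4 : d3^2 + x3^2 = L^2) (h5 : d1^2 + x1^2 = L^2) (h6 : d2^2 + x2^2 = L^2)
    (e10 : ℝ) (he10 : e10 = x1+x2+x3) (e01 : ℝ) (he01 : e01 = d1+d2+d3)
    (e11 : ℝ) (he11 : e11 = x1*d2+d1*x2+x2*d3+d2*x3+x3*d1+d3*x1)
    (e21 : ℝ) (he21 : e21 = x1*x2*d3+x2*x3*d1+x3*x1*d2)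
    (e12 : ℝ) (he12 : e12 = x1*d2*d3+x2*d3*d1+x3*d1*d2) :
    4*e11*e12 - 2*e11*e10^3 + 6*e21*e10^2 + 2*e21*e01^2 - e01^3*e10^2 + e01*e10^4 + 2*e21*L^2 - 2*e11*e10*L^2 + 2*e01*e10^2*L^2 + e01^3*L^2 - 3*e01*L^4 = 0 := by
  subst he10 he01 he11 he21 he12
  linear_combination ((2)*d3*L^2 + (-6)*d1*d2*d3 + (-4)*x3^2*d3 + (2)*x3^2*d2 + (2)*x3^2*d1 + (4)*x2*x3*d2 + (2)*x2*x3*d1 + (-2)*x2^2*d2 + (-2)*x2^2*d1 + (2)*x1*x3*d2 + (4)*x1*x3*d1 + (-2)*x1*x2*d3 + (-4)*x1*x2*d2 + (-4)*x1*x2*d1 + (-2)*x1^2*d2 + (-2)*x1^2*d1) * h1 + ((-3)*d3*L^2 + (-3)*d2*L^2 + (-1)*d1*L^2 + (3)*x3^2*d3 + (-1)*x3^2*d2 + (1)*x3^2*d1 + (-2)*x2*x3*d3 + (-2)*x2*x3*d2 + (-1)*x2^2*d3 + (3)*x2^2*d2 + (1)*x2^2*d1 + (6)*x1*x3*d3 +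 (4)*x1*x3*d2 + (2)*x1*x3*d1 + (4)*x1*x2*d3 + (6)*x1*x2*d2 + (2)*x1*x2*d1 + (3)*x1^2*d3 + (3)*x1^2*d2 + (1)*x1^2*d1) * h2 + ((-3)*d3*L^2 + (-1)*d2*L^2 + (-3)*d1*L^2 + (3)*x3^2*d3 + (1)*x3^2*d2 + (-1)*x3^2*d1 + (6)*x2*x3*d3 + (2)*x2*x3*d2 + (4)*x2*x3*d1 + (3)*x2^2*d3 + (1)*x2^2*d2 + (3)*x2^2*d1 + (-2)*x1*x3*d3 + (-2)*x1*x3*d1 + (4)*x1*x2*d3 + (2)*x1*x2*d2 + (6)*x1*x2*d1 + (-1)*x1^2*d3 + (1)*x1^2*d2 + (3)*x1^2*d1) * h3 + ((3)*d3*L^2 + (3)*d2*L^2 + (3)*d1*L^2 + (-6)*d1*d2*d3 + (-5)*x3^2*d3 + (-1)*x3^2*d2 + (-1)*x3^2*d1 + (-2)*x2*x3*d3 + (-2)*x2*x3*d2 + (-2)*x2*x3*d1 + (-1)*x2^2*d3 + (-5)*x2^2*d2 + (-1)*x2^2*d1 + (-2)*x1*x3*d3 + (-2)*x1*x3*d2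 + (-2)*x1*x3*d1 + (-2)*x1*x2*d3 + (-2)*x1*x2*d2 + (-2)*x1*x2*d1 + (-1)*x1^2*d3 + (-1)*x1^2*d2 + (-5)*x1^2*d1) * h4
end

section
/- Let x1,x2,x3,d1,d2,d3,L be real numbers satisfying the cuboid equations. Define e10=x1+x2+x3, e20=x1*x2+x2*x3+x3*x1, e30=x1*x2*x3, e01=d1+d2+d3, e02=d1*d2+d2*d3+d3*d1, e11=x1*d2+d1*x2+x2*d3+d2*x3+x3*d1+d3*x1, e12=x1*d2*d3+x2*d3*d1+x3*d1*d2. Then e10^3 = 2*e12 + 6*e30 + 4*e02*e10 - 2*e01*e11 - e10*e01^2 + 7*e10*L^2. -/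
theorem stmt_12 (x1 x2 x3 d1 d2 d3 L : ℝ) (h1 : x1^2 + x2^2 = d3^2) (h2 : x2^2 + x3^2 = d1^2) (h3 : x3^2 + x1^2 = d2^2) (h4 : d3^2 + x3^2 = L^2) (h5 : d1^2 + x1^2 = L^2) (h6 : d2^2 + x2^2 = L^2)
    (e10 : ℝ) (he10 : e10 = x1+x2+x3) (e20 : ℝ) (he20 : e20 = x1*x2+x2*x3+x3*x1)
    (e30 : ℝ) (he30 : e30 = x1*x2*x3) (e01 : ℝ) (he01 : e01 = d1+d2+d3)
    (e02 : ℝ) (he02 : e02 = d1*d2+d2*d3+d3*d1)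
    (e11 : ℝ) (he11 : e11 = x1*d2+d1*x2+x2*d3+d2*x3+x3*d1+d3*x1)
    (e12 : ℝ) (he12 : e12 = x1*d2*d3+x2*d3*d1+x3*d1*d2) :
    e10^3 = 2*e12 + 6*e30 + 4*e02*e10 - 2*e01*e11 - e10*e01^2 + 7*e10*L^2 := by
  subst he10 he20 he30 he01 he02 he11 he12
  linear_combination (4*x1+4*x2+6*x3) * h1 + (-x1-3*x2-3*x3) * h2 + (-3*x1-x2-3*x3) * h3 + (7*x1+7*x2+7*x3) * h4
end

section
/- Let x1,x2,x3,d1,d2,d3,L be real numbers satisfying the cuboid equations. Define e10=x1+x2+x3, e20=x1*x2+x2*x3+x3*x1, e01=d1+d2+d3, e03=d1*d2*d3, e11=x1*d2+d1*x2+x2*d3+d2*x3+x3*d1+d3*x1, e21=x1*x2*d3+x2*x3*d1+x3*x1*d2. Then e01^3 = 2*e21 + 6*e03 - 2*e10*e11 - 10*e20*e01 + 6*e01*e10^2. -/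
theorem stmt_13 (x1 x2 x3 d1 d2 d3 L : ℝ) (h1 : x1^2 + x2^2 = d3^2) (h2 : x2^2 + x3^2 = d1^2) (h3 : x3^2 + x1^2 = d2^2) (h4 : d3^2 + x3^2 = L^2) (h5 : d1^2 + x1^2 = L^2) (h6 : d2^2 + x2^2 = L^2)
    (e10 : ℝ) (he10 : e10 = x1+x2+x3) (e20 : ℝ) (he20 : e20 = x1*x2+x2*x3+x3*x1)
    (e01 : ℝ) (he01 : e01 = d1+d2+d3) (e03 : ℝ) (he03 : e03 = d1*d2*d3)
    (e11 : ℝ) (he11 : e11 = x1*d2+d1*x2+x2*d3+d2*x3+x3*d1+d3*x1)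
    (e21 : ℝ) (he21 : e21 = x1*x2*d3+x2*x3*d1+x3*x1*d2) :
    e01^3 = 2*e21 + 6*e03 - 2*e10*e11 - 10*e20*e01 + 6*e01*e10^2 := by
  subst he10 he20 he01 he03 he11 he21
  linear_combination (-3*d1-3*d2-d3)*h1 + (-d1-3*d2-3*d3)*h2 + (-3*d1-d2-3*d3)*h3
end

section
/- Let x1,x2,x3,d1,d2,d3,L be real numbers satisfying the cuboid equations. Define e20=x1*x2+x2*x3+x3*x1, e30=x1*x2*x3, e01=d1+d2+d3, e02=d1*d2+d2*d3+d3*d1, e03=d1*d2*d3, e10=x1+x2+x3, e11=x1*d2+d1*x2+x2*d3+d2*x3+x3*d1+d3*x1, e12=x1*d2*d3+x2*d3*d1+x3*d1*d2. Then e20*e30 = -e11*e03 + e12*e02 + e12*L^2 + e02*e10*L^2 - e11*e01*L^2 + e10*L^4. -/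
theorem stmt_14 (x1 x2 x3 d1 d2 d3 L : ℝ) (h1 : x1^2 + x2^2 = d3^2) (h2 : x2^2 + x3^2 = d1^2) (h3 : x3^2 + x1^2 = d2^2) (h4 : d3^2 + x3^2 = L^2) (h5 : d1^2 + x1^2 = L^2) (h6 : d2^2 + x2^2 = L^2)
    (e20 : ℝ) (he20 : e20 = x1*x2+x2*x3+x3*x1) (e30 : ℝ) (he30 : e30 = x1*x2*x3)
    (e01 : ℝ) (he01 : e01 = d1+d2+d3) (e02 : ℝ) (he02 : e02 = d1*d2+d2*d3+d3*d1)
    (e03 : ℝ) (he03 : e03 = d1*d2*d3) (e10 : ℝ) (he10 : e10 = x1+x2+x3)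
    (e11 : ℝ) (he11 : e11 = x1*d2+d1*x2+x2*d3+d2*x3+x3*d1+d3*x1)
    (e12 : ℝ) (he12 : e12 = x1*d2*d3+x2*d3*d1+x3*d1*d2) :
    e20*e30 = -e11*e03 + e12*e02 + e12*L^2 + e02*e10*L^2 - e11*e01*L^2 + e10*L^4 := by
  subst he20 he30 he01 he02 he03 he10 he11 he12
  linear_combination
    (x3*d3^2 - x3*d2^2 - x3*d1^2 + 2*x3^3 + x2*x3^2 + x2^2*x3 + x1*x3^2 + x1^2*x3) * h1 +
    (x3*d2^2 - x3^3 - x2*x3^2 - x2^2*x3 - x1^2*x3) * h2 +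
    (-x1*x3^2 - x1^2*x3) * h3 +
    (x3*L^2 + x3*d3^2 - x3*d2^2 - x3*d1^2 + x3^3 + x2*L^2 - x2*d1^2 + x2*x3^2 + x1*L^2 - x1*d2^2 + x1*x3^2) * h4
end

section
/- Let x1,x2,x3,d1,d2,d3,L be real numbers satisfying the cuboid equations. Define e20=x1*x2+x2*x3+x3*x1, e30=x1*x2*x3, e02=d1*d2+d2*d3+d3*d1, e03=d1*d2*d3, e10=x1+x2+x3, e01=d1+d2+d3, e11=x1*d2+d1*x2+x2*d3+d2*x3+x3*d1+d3*x1, e21=x1*x2*d3+x2*x3*d1+x3*x1*d2. Then e02*e03 = -e11*e30 + e21*e20 + e21*L^2 + e20*e01*L^2 - e11*e10*L^2 + e01*L^4. -/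
theorem stmt_15 (x1 x2 x3 d1 d2 d3 L : ℝ) (h1 : x1^2 + x2^2 = d3^2) (h2 : x2^2 + x3^2 = d1^2) (h3 : x3^2 + x1^2 = d2^2) (h4 : d3^2 + x3^2 = L^2) (h5 : d1^2 + x1^2 = L^2) (h6 : d2^2 + x2^2 = L^2)
    (e20 : ℝ) (he20 : e20 = x1*x2+x2*x3+x3*x1) (e30 : ℝ) (he30 : e30 = x1*x2*x3)
    (e02 : ℝ) (he02 : e02 = d1*d2+d2*d3+d3*d1) (e03 : ℝ) (he03 : e03 = d1*d2*d3)
    (e10 : ℝ) (he10 : e10 = x1+x2+x3) (e01 : ℝ) (he01 : e01 = d1+d2+d3)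
    (e11 : ℝ) (he11 : e11 = x1*d2+d1*x2+x2*d3+d2*x3+x3*d1+d3*x1)
    (e21 : ℝ) (he21 : e21 = x1*x2*d3+x2*x3*d1+x3*x1*d2) :
    e02*e03 = -e11*e30 + e21*e20 + e21*L^2 + e20*e01*L^2 - e11*e10*L^2 + e01*L^4 := by
  subst he20 he30 he02 he03 he10 he01 he11 he21
  linear_combination
    (d3^3 + d2*d3^2 + d1*d3^2 - d1*d2^2 - d1^2*d2 + 2*x3^2*d3 + x3^2*d2 + x3^2*d1 + x2^2*d2 + x1^2*d1) * h1
    + (-(x3^2*d3) - x2^2*d2 - x1^2*d3 - x1^2*d2) * h2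
    + (-(d1^2*d3) - x2^2*d1 - x1^2*d1) * h3
    + (d3*L^2 + d3^3 + d2*L^2 + d2*d3^2 + d1*L^2 + d1*d3^2 + x3^2*d3 - x2^2*d3 - x2^2*d1 - x1^2*d3 - x1^2*d2) * h4
end
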